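/- arXiv:2201.03895 — 3 statements merged into one kernel-verified Lean document; each statement's English description precedes it below -/
import Mathlib

section
/- If a point-line incidence structure satisfies the generalized quadrangle axiom (for every non-incident point-line pair (x,Y) there is exactly one point z on Y collinear with x) but does not contain an ordinary quadrangle (a subquadrangle of order (1,1)), then it is either the empty geometry, a set of points with no lines, a set of lines with no points, a perp geometry (one point incident with a set of lines), or a dual perp geometry. -/
open Cardinal

structure PLGeom where
  P : Type
  L : Type
  I : P → L → Prop

namespace PLGeom

def Collinear (G : PLGeom) (x y : G.P) : Prop := ∃ l, G.I x l ∧ G.I y l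

def Concurrent (G : PLGeom) (l m : G.L) : Prop := ∃ p, G.I p l ∧ G.I p m

/-- GQ axiom (3): for every non-incident point-line pair there is exactly one
    point of the line collinear with the point. -/
def Axiom3 (G : PLGeom) : Prop :=
  ∀ (x : G.P) (Y : G.L), ¬ G.I x Y → ∃! z : G.P, G.I z Y ∧ G.Collinear x z

/-- `G` has order `(s,t)`: every line has `s+1` points, every point is on `t+1` lines. -/
def HasOrder (G : PLGeom) (s t : Cardinal) : Prop :=
  (∀ l : G.L, #{p : G.P // G.I p l} = s + 1) ∧
  (∀ p : G.P, #{l : G.L // G.I p l} = t + 1)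

def IsGQ (G : PLGeom) (s t : Cardinal) : Prop := G.HasOrder s t ∧ G.Axiom3

/-- A subgeometry: a set of points and a set of lines, with inherited incidence. -/
structure Sub (G : PLGeom) where
  pts : Set G.P
  lns : Set G.L

def Sub.toGeom {G : PLGeom} (S : Sub G) : PLGeom where
  P := ↥S.pts
  L := ↥S.lns
  I := fun p l => G.I p.1 l.1

/-- A line of the subgeometry is full if it carries all points of `G` incident with it. -/
def Sub.FullLine {G : PLGeom} (S : Sub G) (l : G.L) : Prop :=
  l ∈ S.lns ∧ ∀ p, G.I p l → p ∈ S.pts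

end PLGeom

open PLGeom

/-- An ordinary quadrangle (a subquadrangle of order `(1,1)`):
    four distinct points and four distinct lines forming a 4-cycle in the incidence graph. -/
def PLGeom.HasOrdinaryQuadrangle (G : PLGeom) : Prop :=
  ∃ (x₁ x₂ x₃ x₄ : G.P) (l₁ l₂ l₃ l₄ : G.L),
    x₁ ≠ x₂ ∧ x₂ ≠ x₃ ∧ x₃ ≠ x₄ ∧ x₄ ≠ x₁ ∧ x₁ ≠ x₃ ∧ x₂ ≠ x₄ ∧
    l₁ ≠ l₂ ∧ l₂ ≠ l₃ ∧ l₃ ≠ l₄ ∧ l₄ ≠ l₁ ∧ l₁ ≠ l₃ ∧ l₂ ≠ l₄ ∧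
    G.I x₁ l₁ ∧ G.I x₂ l₁ ∧ G.I x₂ l₂ ∧ G.I x₃ l₂ ∧
    G.I x₃ l₃ ∧ G.I x₄ l₃ ∧ G.I x₄ l₄ ∧ G.I x₁ l₄

lemma PLGeom.collinear_symm' (G : PLGeom) {a b : G.P} (h : G.Collinear a b) : G.Collinear b a := by
  obtain ⟨l, h1, h2⟩ := h; exact ⟨l, h2, h1⟩

/-- Uniqueness part of Axiom3 packaged conveniently. -/
lemma PLGeom.uniq_of_axiom3 (G : PLGeom) (h3 : G.Axiom3) {p : G.P} {l : G.L} (hpl : ¬ G.I p l)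
    {a b : G.P} (ha : G.I a l) (hca : G.Collinear p a) (hb : G.I b l) (hcb : G.Collinear p b) :
    a = b := by
  obtain ⟨z, _, hz⟩ := h3 p l hpl
  rw [hz a ⟨ha, hca⟩, hz b ⟨hb, hcb⟩]

/-- A non-collinear pair of points with two distinct common neighbours gives an
ordinary quadrangle. -/
lemma PLGeom.quad_of_two_common (G : PLGeom) (h3 : G.Axiom3) {x y z₁ z₂ : G.P}
    (hxy : ¬ G.Collinear x y) (hz : z₁ ≠ z₂)
    (h1x : G.Collinear x z₁) (h1y : G.Collinear y z₁)
    (h2x : G.Collinear x z₂) (h2y : G.Collinear y z₂) :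
    G.HasOrdinaryQuadrangle := by
  obtain ⟨A₁, hxA₁, hz₁A₁⟩ := h1x
  obtain ⟨B₁, hyB₁, hz₁B₁⟩ := h1y
  obtain ⟨A₂, hxA₂, hz₂A₂⟩ := h2x
  obtain ⟨B₂, hyB₂, hz₂B₂⟩ := h2y
  have hxy' : x ≠ y := by rintro rfl; exact hxy ⟨A₁, hxA₁, hxA₁⟩
  have hxz₁ : x ≠ z₁ := by rintro rfl; exact hxy (G.collinear_symm' ⟨B₁, hyB₁, hz₁B₁⟩)
  have hz₁y : z₁ ≠ y := by rintro rfl; exact hxy ⟨A₁, hxA₁, hz₁A₁⟩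
  have hyz₂ : y ≠ z₂ := by rintro rfl; exact hxy ⟨A₂, hxA₂, hz₂A₂⟩
  have hz₂x : z₂ ≠ x := by rintro rfl; exact hxy (G.collinear_symm' ⟨B₂, hyB₂, hz₂B₂⟩)
  refine ⟨x, z₁, y, z₂, A₁, B₁, B₂, A₂, hxz₁, hz₁y, hyz₂, hz₂x, hxy', hz,
    ?_, ?_, ?_, ?_, ?_, ?_, hxA₁, hz₁A₁, hz₁B₁, hyB₁, hyB₂, hz₂B₂, hz₂A₂, hxA₂⟩
  · rintro rfl; exact hxy ⟨A₁, hxA₁, hyB₁⟩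
  · intro hEq
    rw [← hEq] at hz₂B₂
    have hxB₁ : ¬ G.I x B₁ := fun h => hxy ⟨B₁, h, hyB₁⟩
    exact hz (G.uniq_of_axiom3 h3 hxB₁ hz₁B₁ ⟨A₁, hxA₁, hz₁A₁⟩ hz₂B₂ ⟨A₂, hxA₂, hz₂A₂⟩)
  · rintro rfl; exact hxy ⟨B₂, hxA₂, hyB₂⟩
  · intro hEq
    rw [hEq] at hz₂A₂
    have hyA₁ : ¬ G.I y A₁ := fun h => hxy ⟨A₁, hxA₁, h⟩
    exact hz (G.uniq_of_axiom3 h3 hyA₁ hz₂A₂ ⟨B₂, hyB₂, hz₂B₂⟩ hz₁A₁ ⟨B₁, hyB₁, hz₁B₁⟩).symm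
  · rintro rfl; exact hxy ⟨A₁, hxA₁, hyB₂⟩
  · rintro rfl; exact hxy ⟨B₁, hxA₂, hyB₁⟩

/-- a point-line incidence structure satisfying the GQ axiom (3) and containing
no ordinary quadrangle is the empty geometry, a set of points with no lines, a set of lines
with no points, a perp geometry (one point incident with all the lines), or a dual perp
geometry (one line incident with all the points). -/
theorem stmt0 (G : PLGeom) (h3 : G.Axiom3) (hq : ¬ G.HasOrdinaryQuadrangle) :
    (IsEmpty G.P ∧ IsEmpty G.L) ∨ IsEmpty G.L ∨ IsEmpty G.P ∨
    (∃ x : G.P, ∀ l : G.L, G.I x l) ∨ (∃ l : G.L, ∀ p : G.P, G.I p l) := by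
  by_cases hL : IsEmpty G.L
  · exact Or.inr (Or.inl hL)
  by_cases hP : IsEmpty G.P
  · exact Or.inr (Or.inr (Or.inl hP))
  by_cases hxall : ∃ x : G.P, ∀ l : G.L, G.I x l
  · exact Or.inr (Or.inr (Or.inr (Or.inl hxall)))
  by_cases hlall : ∃ l : G.L, ∀ p : G.P, G.I p l
  · exact Or.inr (Or.inr (Or.inr (Or.inr hlall)))
  exfalso
  push_neg at hxall hlall
  -- every point lies on some line
  have hline : ∀ p : G.P, ∃ l, G.I p l := by
    intro p
    obtain ⟨Y, hY⟩ := hxall p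
    obtain ⟨z, ⟨_, M, hpM, _⟩, _⟩ := h3 p Y hY
    exact ⟨M, hpM⟩
  -- there exist two non-collinear points
  have hnc : ∃ x y : G.P, ¬ G.Collinear x y := by
    by_contra hcol
    push_neg at hcol
    obtain ⟨x0⟩ := not_isEmpty_iff.mp hP
    obtain ⟨Y, hY⟩ := hxall x0
    obtain ⟨z, ⟨hzY, M, hxM, hzM⟩, _⟩ := h3 x0 Y hY
    obtain ⟨w, hw⟩ := hlall M
    have := G.uniq_of_axiom3 h3 hw hxM (hcol w x0) hzM (hcol w z)
    exact hY (this ▸ hzY)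
  obtain ⟨x, y, hxy⟩ := hnc
  obtain ⟨N, hyN⟩ := hline y
  have hxN : ¬ G.I x N := fun h => hxy ⟨N, h, hyN⟩
  obtain ⟨z, ⟨hzN, hcxz⟩, _⟩ := h3 x N hxN
  have hcyz : G.Collinear y z := ⟨N, hyN, hzN⟩
  -- Claim 1: every line through y contains z
  have claim1 : ∀ N' : G.L, G.I y N' → G.I z N' := by
    intro N' hyN'
    have hxN' : ¬ G.I x N' := fun h => hxy ⟨N', h, hyN'⟩
    obtain ⟨z', ⟨hz'N', hcxz'⟩, _⟩ := h3 x N' hxN'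
    rcases eq_or_ne z' z with rfl | hne
    · exact hz'N'
    · exact absurd (G.quad_of_two_common h3 hxy hne hcxz' ⟨N', hyN', hz'N'⟩ hcxz hcyz) hq
  -- Claim 2: every line through x contains z
  have claim2 : ∀ M' : G.L, G.I x M' → G.I z M' := by
    intro M' hxM'
    have hyM' : ¬ G.I y M' := fun h => hxy ⟨M', hxM', h⟩
    obtain ⟨u, ⟨huM', hcyu⟩, _⟩ := h3 y M' hyM'
    rcases eq_or_ne u z with rfl | hne
    · exact huM'
    · exact absurd (G.quad_of_two_common h3 hxy hne ⟨M', hxM', huM'⟩ hcyu hcxz hcyz) hq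
  -- Claim 3: z lies on every line
  have claim3 : ∀ L : G.L, G.I z L := by
    intro L
    by_contra hzL
    have hxL : ¬ G.I x L := fun h => hzL (claim2 L h)
    have hyL : ¬ G.I y L := fun h => hzL (claim1 L h)
    obtain ⟨w, ⟨hwL, W, hxW, hwW⟩, _⟩ := h3 x L hxL
    have hzW : G.I z W := claim2 W hxW
    obtain ⟨v, ⟨hvL, V, hyV, hvV⟩, _⟩ := h3 y L hyL
    have hzV : G.I z V := claim1 V hyV
    have hzw : z ≠ w := fun h => hzL (h ▸ hwL)
    rcases eq_or_ne w v with rfl | hne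
    · exact hq (G.quad_of_two_common h3 hxy hzw hcxz hcyz ⟨W, hxW, hwW⟩ ⟨V, hyV, hvV⟩)
    · have hxv : ¬ G.Collinear x v := fun hc =>
        hne (G.uniq_of_axiom3 h3 hxL hwL ⟨W, hxW, hwW⟩ hvL hc)
      exact hq (G.quad_of_two_common h3 hxv hzw ⟨W, hxW, hzW⟩ ⟨V, hvV, hzV⟩
        ⟨W, hxW, hwW⟩ ⟨L, hvL, hwL⟩)
  obtain ⟨l, hl⟩ := hxall z
  exact hl (claim3 l)
end

section
/- Let q = 2^h with gcd(i,h) = 1 for positive integers i, h. Then the set O(i,h) = {(1 : t : t^{2^i}) : t ∈ F_q} ∪ {(0 : 0 : 1)} in the projective plane PG(2,q) is an oval with nucleus (0 : 1 : 0); that is, every line of PG(2,q) meets O(i,h) in at most 2 points, and through each point of O(i,h) there is exactly one tangent line (meeting O(i,h) in only that point), all tangent lines passing through (0:1:0). -/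
/-!
Write a line as `a x₀ + b x₁ + c x₂ = 0`; the point `(1 : t : t^{2^i})` lies on it iff
`a + b t + c t^{2^i} = 0`. Since `t ↦ t^{2^i}` is additive in characteristic 2, two such roots
`t ≠ s` force `b = (t - s)^{2^i - 1} c`. As `gcd(2^i - 1, 2^h - 1) = 2^{gcd(i,h)} - 1 = 1`, the
map `u ↦ u^{2^i - 1}` permutes `F_q^×`, so `t - s` is determined by the line: no three points are
collinear. Lines with `b = 0` (those through `(0 : 1 : 0)`) meet the oval only once because the
Frobenius power is injective, and on a line with `b ≠ 0` surjectivity of `u ↦ u^{2^i - 1}`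
produces a second point.
-/

open Set

theorem bijOn_pow_compl_zero_of_coprime {K : Type*} [GroupWithZero K] {n : ℕ}
    (hn : (Nat.card K - 1).Coprime n) : BijOn (· ^ n : K → K) {0}ᶜ {0}ᶜ := by
  rw [← Nat.card_units] at hn
  have hbij := hn.pow_left_bijective
  refine ⟨fun u hu ↦ pow_ne_zero n hu, fun u hu v hv huv ↦ ?_, fun r hr ↦ ?_⟩
  · exact congrArg Units.val (@hbij.1 (Units.mk0 u hu) (Units.mk0 v hv) (Units.ext huv))
  · obtain ⟨w, hw⟩ := hbij.2 (Units.mk0 r hr)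
    exact ⟨w, w.ne_zero, congrArg Units.val hw⟩

variable {K : Type*} [Field K]

theorem LinearMap.apply_fin_three (φ : (Fin 3 → K) →ₗ[K] K) (x : Fin 3 → K) :
    φ x = x 0 * φ ![1, 0, 0] + x 1 * φ ![0, 1, 0] + x 2 * φ ![0, 0, 1] := by
  have hx : x = x 0 • ![1, 0, 0] + x 1 • ![0, 1, 0] + x 2 • ![0, 0, 1] := by
    ext j; fin_cases j <;> simp
  conv_lhs => rw [hx]
  simp only [map_add, map_smul, smul_eq_mul]

theorem LinearMap.eq_zero_of_fin_three {φ : (Fin 3 → K) →ₗ[K] K} (h₀ : φ ![1, 0, 0] = 0)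
    (h₁ : φ ![0, 1, 0] = 0) (h₂ : φ ![0, 0, 1] = 0) : φ = 0 :=
  LinearMap.ext fun x ↦ by rw [φ.apply_fin_three, h₀, h₁, h₂]; simp

section PowCurve

variable {p i : ℕ} {φ : (Fin 3 → K) →ₗ[K] K}

theorem apply_pow_point (φ : (Fin 3 → K) →ₗ[K] K) (t : K) :
    φ ![1, t, t ^ p ^ i] = φ ![1, 0, 0] + t * φ ![0, 1, 0] + t ^ p ^ i * φ ![0, 0, 1] := by
  rw [φ.apply_fin_three ![1, t, t ^ p ^ i]]
  simp

theorem eq_of_apply_pow_point_of_apply_e3 (hφ : φ ≠ 0) (hc : φ ![0, 0, 1] = 0) {t s : K}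
    (ht : φ ![1, t, t ^ p ^ i] = 0) (hs : φ ![1, s, s ^ p ^ i] = 0) : t = s := by
  rw [apply_pow_point, hc, mul_zero, add_zero] at ht hs
  have hb : φ ![0, 1, 0] ≠ 0 := fun hb ↦
    hφ (LinearMap.eq_zero_of_fin_three (by simpa [hb] using ht) hb hc)
  exact mul_right_cancel₀ hb (by linear_combination ht - hs)

theorem apply_e2_eq_neg_slope [ExpChar K p] {t s : K} (hts : t ≠ s)
    (ht : φ ![1, t, t ^ p ^ i] = 0) (hs : φ ![1, s, s ^ p ^ i] = 0) :
    φ ![0, 1, 0] = -((t - s) ^ (p ^ i - 1) * φ ![0, 0, 1]) := by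
  rw [apply_pow_point] at ht hs
  have hpow : (t - s) * (t - s) ^ (p ^ i - 1) = t ^ p ^ i - s ^ p ^ i := by
    rw [mul_pow_sub_one (expChar_pow_pos K p i).ne', sub_pow_expChar_pow]
  refine mul_left_cancel₀ (sub_ne_zero.mpr hts) ?_
  linear_combination ht - hs + φ ![0, 0, 1] * hpow

theorem eq_or_eq_or_eq_of_apply_pow_point [ExpChar K p]
    (hinj : InjOn (· ^ (p ^ i - 1) : K → K) {0}ᶜ) (hφ : φ ≠ 0) {t s r : K}
    (ht : φ ![1, t, t ^ p ^ i] = 0) (hs : φ ![1, s, s ^ p ^ i] = 0)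
    (hr : φ ![1, r, r ^ p ^ i] = 0) : t = s ∨ s = r ∨ t = r := by
  by_cases hc : φ ![0, 0, 1] = 0
  · exact .inl (eq_of_apply_pow_point_of_apply_e3 hφ hc ht hs)
  by_contra! ⟨hts, hsr, htr⟩
  have hslope := (apply_e2_eq_neg_slope hts ht hs).symm.trans (apply_e2_eq_neg_slope htr ht hr)
  rw [neg_inj, mul_left_inj' hc] at hslope
  exact hsr (sub_right_injective (hinj (sub_ne_zero.mpr hts) (sub_ne_zero.mpr htr) hslope))

theorem exists_apply_pow_point_eq_zero (hb : φ ![0, 1, 0] ≠ 0) (hc : φ ![0, 0, 1] = 0) :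
    ∃ t : K, φ ![1, t, t ^ p ^ i] = 0 :=
  ⟨-(φ ![1, 0, 0] / φ ![0, 1, 0]), by
    rw [apply_pow_point, hc, neg_mul, div_mul_cancel₀ _ hb]; ring⟩

theorem apply_e3_ne_zero_of_apply_e2_eq_zero (hφ : φ ≠ 0) (hb : φ ![0, 1, 0] = 0) {t : K}
    (ht : φ ![1, t, t ^ p ^ i] = 0) : φ ![0, 0, 1] ≠ 0 := fun hc ↦
  hφ (LinearMap.eq_zero_of_fin_three (by simpa [apply_pow_point, hb, hc] using ht) hb hc)

theorem eq_of_apply_pow_point_of_apply_e2 [ExpChar K p] (hφ : φ ≠ 0) (hb : φ ![0, 1, 0] = 0)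
    {t s : K} (ht : φ ![1, t, t ^ p ^ i] = 0) (hs : φ ![1, s, s ^ p ^ i] = 0) : t = s := by
  have hc := apply_e3_ne_zero_of_apply_e2_eq_zero hφ hb ht
  rw [apply_pow_point, hb, mul_zero, add_zero] at ht hs
  have hpow : t ^ p ^ i = s ^ p ^ i := mul_right_cancel₀ hc (by linear_combination ht - hs)
  exact (iterateFrobenius K p i).injective hpow

theorem exists_ne_apply_pow_point_eq_zero [ExpChar K p]
    (hsurj : SurjOn (· ^ (p ^ i - 1) : K → K) {0}ᶜ {0}ᶜ) (hb : φ ![0, 1, 0] ≠ 0)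
    (hc : φ ![0, 0, 1] ≠ 0) {t : K} (ht : φ ![1, t, t ^ p ^ i] = 0) :
    ∃ s ≠ t, φ ![1, s, s ^ p ^ i] = 0 := by
  obtain ⟨w, hw, hwn⟩ := hsurj (show -(φ ![0, 1, 0] / φ ![0, 0, 1]) ≠ 0 by simp [hb, hc])
  have hwp : w ^ p ^ i = w * w ^ (p ^ i - 1) :=
    (mul_pow_sub_one (expChar_pow_pos K p i).ne' w).symm
  refine ⟨t - w, by simpa using hw, ?_⟩
  rw [apply_pow_point] at ht ⊢
  have hwc : w ^ (p ^ i - 1) * φ ![0, 0, 1] = -φ ![0, 1, 0] := by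
    rw [show w ^ (p ^ i - 1) = _ from hwn, neg_mul, div_mul_cancel₀ _ hc]
  rw [sub_pow_expChar_pow, hwp]
  linear_combination ht - w * hwc

end PowCurve

theorem exists_line_through_nucleus {x : Fin 3 → K} (hx : x 0 ≠ 0 ∨ x 2 ≠ 0) :
    ∃ φ : (Fin 3 → K) →ₗ[K] K, φ ≠ 0 ∧ φ x = 0 ∧ φ ![0, 1, 0] = 0 := by
  refine ⟨x 2 • LinearMap.proj 0 - x 0 • LinearMap.proj 2, fun hφ ↦ ?_, ?_, ?_⟩
  · have h₀ := LinearMap.congr_fun hφ ![1, 0, 0]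
    have h₂ := LinearMap.congr_fun hφ ![0, 0, 1]
    simp at h₀ h₂
    tauto
  · simp [mul_comm]
  · simp

/-- The Segre oval `O(i,h) = {(1 : t : t^{2^i}) : t ∈ F_q} ∪ {(0 : 0 : 1)}` in `PG(2,q)`,
`q = 2^h`, with points given by (normalized) homogeneous coordinate vectors. -/
def SegreOval (i h : ℕ) : Set (Fin 3 → GaloisField 2 h) :=
  {x | (∃ t : GaloisField 2 h, x = ![1, t, t ^ 2 ^ i]) ∨ x = ![0, 0, 1]}

namespace SegreOval

variable {i h : ℕ} {φ : (Fin 3 → GaloisField 2 h) →ₗ[GaloisField 2 h] GaloisField 2 h}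
  {x : Fin 3 → GaloisField 2 h}

theorem eq_or_eq_or_eq_of_apply_eq_zero
    (hinj : InjOn (· ^ (2 ^ i - 1) : GaloisField 2 h → GaloisField 2 h) {0}ᶜ) (hφ : φ ≠ 0)
    {y z : Fin 3 → GaloisField 2 h} (hx : x ∈ SegreOval i h) (hy : y ∈ SegreOval i h)
    (hz : z ∈ SegreOval i h) (hfx : φ x = 0) (hfy : φ y = 0) (hfz : φ z = 0) :
    x = y ∨ y = z ∨ x = z := by
  rcases hx with ⟨t, rfl⟩ | rfl <;> rcases hy with ⟨s, rfl⟩ | rfl <;>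
    rcases hz with ⟨r, rfl⟩ | rfl
  · rcases eq_or_eq_or_eq_of_apply_pow_point hinj hφ hfx hfy hfz with rfl | rfl | rfl <;> simp
  · exact .inl (by rw [eq_of_apply_pow_point_of_apply_e3 hφ hfz hfx hfy])
  · exact .inr (.inr (by rw [eq_of_apply_pow_point_of_apply_e3 hφ hfy hfx hfz]))
  · exact .inr (.inl rfl)
  · exact .inr (.inl (by rw [eq_of_apply_pow_point_of_apply_e3 hφ hfx hfy hfz]))
  · exact .inr (.inr rfl)
  · exact .inl rfl
  · exact .inl rfl

theorem apply_nucleus_eq_zero_of_tangent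
    (hsurj : SurjOn (· ^ (2 ^ i - 1) : GaloisField 2 h → GaloisField 2 h) {0}ᶜ {0}ᶜ)
    (hx : x ∈ SegreOval i h) (hfx : φ x = 0)
    (htan : ∀ y ∈ SegreOval i h, φ y = 0 → y = x) : φ ![0, 1, 0] = 0 := by
  by_contra hb
  rcases hx with ⟨t, rfl⟩ | rfl
  · by_cases hc : φ ![0, 0, 1] = 0
    · simpa using htan _ (.inr rfl) hc
    obtain ⟨s, hst, hs⟩ := exists_ne_apply_pow_point_eq_zero hsurj hb hc hfx
    exact hst (by simpa using congrFun (htan _ (.inl ⟨s, rfl⟩) hs) 1)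
  · obtain ⟨s, hs⟩ := exists_apply_pow_point_eq_zero hb hfx
    simpa using htan _ (.inl ⟨s, rfl⟩) hs

theorem eq_of_apply_nucleus_eq_zero (hx : x ∈ SegreOval i h) (hφ : φ ≠ 0) (hfx : φ x = 0)
    (hb : φ ![0, 1, 0] = 0) : ∀ y ∈ SegreOval i h, φ y = 0 → y = x := by
  rintro y (⟨s, rfl⟩ | rfl) hfy <;> rcases hx with ⟨t, rfl⟩ | rfl
  · rw [eq_of_apply_pow_point_of_apply_e2 hφ hb hfy hfx]
  · exact absurd hfx (apply_e3_ne_zero_of_apply_e2_eq_zero hφ hb hfy)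
  · exact absurd hfy (apply_e3_ne_zero_of_apply_e2_eq_zero hφ hb hfx)
  · rfl

end SegreOval

theorem stmt14_general (i h : ℕ) (hh : 0 < h) (hgcd : Nat.gcd i h = 1) :
    (∀ φ : (Fin 3 → GaloisField 2 h) →ₗ[GaloisField 2 h] GaloisField 2 h, φ ≠ 0 →
      ∀ x ∈ SegreOval i h, ∀ y ∈ SegreOval i h, ∀ z ∈ SegreOval i h,
        φ x = 0 → φ y = 0 → φ z = 0 → x = y ∨ y = z ∨ x = z) ∧
    (∀ x ∈ SegreOval i h,
      ∀ φ : (Fin 3 → GaloisField 2 h) →ₗ[GaloisField 2 h] GaloisField 2 h, φ ≠ 0 →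
        φ x = 0 →
        ((∀ y ∈ SegreOval i h, φ y = 0 → y = x) ↔ φ ![0, 1, 0] = 0)) ∧
    (∀ x ∈ SegreOval i h,
      ∃ φ : (Fin 3 → GaloisField 2 h) →ₗ[GaloisField 2 h] GaloisField 2 h, φ ≠ 0 ∧
        φ x = 0 ∧ φ ![0, 1, 0] = 0) := by
  have hpow : BijOn (· ^ (2 ^ i - 1) : GaloisField 2 h → GaloisField 2 h) {0}ᶜ {0}ᶜ := by
    apply bijOn_pow_compl_zero_of_coprime
    rw [GaloisField.card 2 h hh.ne', Nat.Coprime, Nat.pow_sub_one_gcd_pow_sub_one, Nat.gcd_comm,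
      hgcd, pow_one]
  refine ⟨fun φ hφ x hx y hy z hz ↦
      SegreOval.eq_or_eq_or_eq_of_apply_eq_zero hpow.injOn hφ hx hy hz,
    fun x hx φ hφ hfx ↦ ⟨SegreOval.apply_nucleus_eq_zero_of_tangent hpow.surjOn hx hfx,
      SegreOval.eq_of_apply_nucleus_eq_zero hx hφ hfx⟩,
    fun x hx ↦ exists_line_through_nucleus ?_⟩
  rcases hx with ⟨t, rfl⟩ | rfl <;> simp

/-- Segre: for `gcd(i,h) = 1` and `q = 2^h`, the set `O(i,h)` is an oval of
`PG(2,q)` with nucleus `(0 : 1 : 0)`: (1) every line (kernel of a nonzero linear functional)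
meets `O(i,h)` in at most two points; (2) a line through a point `x` of `O(i,h)` is tangent
(meets `O(i,h)` only in `x`) if and only if it passes through the nucleus `(0:1:0)`; and
(3) through every point of `O(i,h)` there is a tangent line (so exactly one, the line joining
the point to the nucleus). -/
theorem stmt14 (i h : ℕ) (hi : 0 < i) (hh : 0 < h) (hgcd : Nat.gcd i h = 1) :
    (∀ φ : (Fin 3 → GaloisField 2 h) →ₗ[GaloisField 2 h] GaloisField 2 h, φ ≠ 0 →
      ∀ x ∈ SegreOval i h, ∀ y ∈ SegreOval i h, ∀ z ∈ SegreOval i h,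
        φ x = 0 → φ y = 0 → φ z = 0 → x = y ∨ y = z ∨ x = z) ∧
    (∀ x ∈ SegreOval i h,
      ∀ φ : (Fin 3 → GaloisField 2 h) →ₗ[GaloisField 2 h] GaloisField 2 h, φ ≠ 0 →
        φ x = 0 →
        ((∀ y ∈ SegreOval i h, φ y = 0 → y = x) ↔ φ ![0, 1, 0] = 0)) ∧
    (∀ x ∈ SegreOval i h,
      ∃ φ : (Fin 3 → GaloisField 2 h) →ₗ[GaloisField 2 h] GaloisField 2 h, φ ≠ 0 ∧
        φ x = 0 ∧ φ ![0, 1, 0] = 0) :=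
  stmt14_general i h hh hgcd
end

section
/- Fix a positive integer i > 1 and let S(i) be the set of positive integers coprime to i, directed by divisibility. Let ℓ be the union (direct limit) of the fields F_{2^u} for u ∈ S(i), and let Õ be the union of the ovals O(i,u) = {(1:t:t^{2^i}) : t ∈ F_{2^u}} ∪ {(0:0:1)} inside PG(2,ℓ). Then Õ is an oval of PG(2,ℓ) with nucleus (0:1:0): every line meets Õ in at most two points, and every line meeting Õ ∪ {(0:1:0)} in at least one point meets it in exactly two points. -/
/-!
Write `q = 2^i` and a line as `A X + B Y + C Z = 0`. Since `t ↦ t^q` is additive in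
characteristic 2, two points `(1:a:a^q) ≠ (1:t:t^q)` of the oval lie on the line only if
`(0:1:(t-a)^(q-1))` does. Every element of `ℓ` satisfies `x^(2^u) = x` for some `u` coprime to
`i`, and `gcd(2^i-1, 2^u-1) = 2^gcd(i,u) - 1 = 1`; so `x ↦ x^(q-1)` is a bijection of `ℓˣ` and
`x ↦ x^q` is onto. Thus a line through neither `(0:0:1)` nor the nucleus `(0:1:0)` meets `X = 0`
in a single point `(0:1:s^(q-1))` and the oval in `∅` or in a pair `{(1:a:a^q), (1:a+s:(a+s)^q)}`,
while each of the other lines contains exactly one oval point besides `(0:0:1)` or the nucleus.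
The bound of two points on `Õ` is the case of a line meeting `Õ`.
-/

/-- The limit oval `Õ = ⋃_{u ∈ S(i)} O(i,u)` inside `PG(2,ℓ)`, where `ℓ = ⋃ F_{2^u}`:
with normalized homogeneous coordinates it is `{(1 : t : t^{2^i}) : t ∈ ℓ} ∪ {(0:0:1)}`. -/
def limitOval (i : ℕ) (ℓ : Type) [Field ℓ] : Set (Fin 3 → ℓ) :=
  {x | (∃ t : ℓ, x = ![1, t, t ^ 2 ^ i]) ∨ x = ![0, 0, 1]}

theorem Nat.Coprime.two_pow_sub_one {m n : ℕ} (h : m.Coprime n) :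
    (2 ^ m - 1).Coprime (2 ^ n - 1) := by
  rw [Nat.Coprime, Nat.pow_sub_one_gcd_pow_sub_one, h.gcd_eq_one, pow_one]

section Monoid

variable {M : Type*} [Monoid M] {x : M} {m n : ℕ}

theorem eq_one_of_pow_eq_one_of_coprime (hmn : m.Coprime n) (hm : x ^ m = 1) (hn : x ^ n = 1) :
    x = 1 := by
  simpa [hmn.gcd_eq_one] using pow_gcd_eq_one.mpr ⟨hm, hn⟩

theorem exists_pow_pow_eq_self_of_coprime (hmn : m.Coprime n) (hn : x ^ n = 1) :
    ∃ k : ℕ, (x ^ k) ^ m = x := by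
  obtain ⟨k, hk⟩ :=
    exists_pow_eq_self_of_coprime (hmn.coprime_dvd_right (orderOf_dvd_of_pow_eq_one hn))
  exact ⟨k, by rw [← pow_mul, mul_comm, pow_mul, hk]⟩

theorem exists_pow_pow_eq_of_pow_pow_eq_self {p u : ℕ} (hu : 0 < u) (hx : x ^ p ^ u = x)
    (i : ℕ) : ∃ t : M, t ^ p ^ i = x := by
  have hfix := (show Function.IsFixedPt (· ^ p ^ u) x from hx).iterate i
  rw [pow_iterate] at hfix
  refine ⟨x ^ (p ^ (u - 1)) ^ i, ?_⟩
  rw [← pow_mul, ← mul_pow, ← pow_succ, Nat.sub_add_cancel hu]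
  exact hfix

end Monoid

theorem pow_sub_one_eq_one_of_pow_eq_self {M₀ : Type*} [MonoidWithZero M₀]
    [IsLeftCancelMulZero M₀] {x : M₀} (hx : x ≠ 0) {n : ℕ} (hn : n ≠ 0) (h : x ^ n = x) :
    x ^ (n - 1) = 1 :=
  mul_left_cancel₀ hx (by rw [mul_pow_sub_one hn, h, mul_one])

section UnionOfCoprimeDegrees

variable {K : Type*} [Field K] {i : ℕ}

theorem pow_two_pow_sub_one_injOn
    (hK : ∀ x : K, ∃ u : ℕ, 0 < u ∧ u.Coprime i ∧ x ^ 2 ^ u = x) :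
    Set.InjOn (fun x : K => x ^ (2 ^ i - 1)) {x | x ≠ 0} := by
  intro x hx y hy hxy
  obtain ⟨u, -, hui, hfix⟩ := hK (x / y)
  have hxy0 : x / y ≠ 0 := div_ne_zero hx hy
  have hi : (x / y) ^ (2 ^ i - 1) = 1 := by
    rw [div_pow, div_eq_one_iff_eq (pow_ne_zero _ hy)]
    exact hxy
  have hu : (x / y) ^ (2 ^ u - 1) = 1 :=
    pow_sub_one_eq_one_of_pow_eq_self hxy0 (by positivity) hfix
  exact (div_eq_one_iff_eq hy).mp (eq_one_of_pow_eq_one_of_coprime hui.two_pow_sub_one hu hi)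

theorem exists_ne_zero_pow_two_pow_sub_one_eq
    (hK : ∀ x : K, ∃ u : ℕ, 0 < u ∧ u.Coprime i ∧ x ^ 2 ^ u = x) {w : K} (hw : w ≠ 0) :
    ∃ s : K, s ≠ 0 ∧ s ^ (2 ^ i - 1) = w := by
  obtain ⟨u, -, hui, hfix⟩ := hK w
  obtain ⟨k, hk⟩ := exists_pow_pow_eq_self_of_coprime hui.symm.two_pow_sub_one
    (pow_sub_one_eq_one_of_pow_eq_self hw (by positivity) hfix)
  exact ⟨w ^ k, pow_ne_zero k hw, hk⟩

theorem exists_pow_two_pow_eq (hK : ∀ x : K, ∃ u : ℕ, 0 < u ∧ u.Coprime i ∧ x ^ 2 ^ u = x)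
    (x : K) : ∃ t : K, t ^ 2 ^ i = x := by
  obtain ⟨u, hu, -, hfix⟩ := hK x
  exact exists_pow_pow_eq_of_pow_pow_eq_self hu hfix i

end UnionOfCoprimeDegrees

section LinearForm

variable {K : Type*} [Field K] (φ : (Fin 3 → K) →ₗ[K] K)

theorem linearForm_apply_vec (a b c : K) :
    φ ![a, b, c] = a * φ ![1, 0, 0] + b * φ ![0, 1, 0] + c * φ ![0, 0, 1] := by
  have hv : ![a, b, c] = a • ![1, 0, 0] + b • ![0, 1, 0] + c • ![0, 0, 1] := by
    ext j; fin_cases j <;> simp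
  rw [hv, map_add, map_add, map_smul, map_smul, map_smul, smul_eq_mul, smul_eq_mul,
    smul_eq_mul]

theorem linearForm_eq_zero (h₀ : φ ![1, 0, 0] = 0) (h₁ : φ ![0, 1, 0] = 0)
    (h₂ : φ ![0, 0, 1] = 0) : φ = 0 := by
  refine LinearMap.ext fun v => ?_
  have hv : v = ![v 0, v 1, v 2] := by ext j; fin_cases j <;> rfl
  rw [hv, linearForm_apply_vec, h₀, h₁, h₂]
  simp

/-- A line not through `(0:0:1)` meets the line `X = 0` in a single point. -/
theorem eq_of_apply_eq_zero_of_apply_infty_ne_zero (h₂ : φ ![0, 0, 1] ≠ 0) {e e' : K}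
    (he : φ ![0, 1, e] = 0) (he' : φ ![0, 1, e'] = 0) : e = e' := by
  rw [linearForm_apply_vec] at he he'
  exact mul_right_cancel₀ h₂ (by linear_combination he - he')

end LinearForm

def HasExactlyTwoZerosOn {V W : Type*} [Zero W] (f : V → W) (S : Set V) : Prop :=
  ∃ x ∈ S, ∃ y ∈ S, x ≠ y ∧ f x = 0 ∧ f y = 0 ∧
    ∀ z ∈ S, f z = 0 → z = x ∨ z = y

theorem HasExactlyTwoZerosOn.eq_or_eq_or_eq {V W : Type*} [Zero W] {f : V → W} {S : Set V}
    (h : HasExactlyTwoZerosOn f S) {x y z : V} (hx : x ∈ S) (hy : y ∈ S) (hz : z ∈ S)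
    (hfx : f x = 0) (hfy : f y = 0) (hfz : f z = 0) : x = y ∨ y = z ∨ x = z := by
  obtain ⟨a, -, b, -, -, -, -, hab⟩ := h
  rcases hab x hx hfx with rfl | rfl <;> rcases hab y hy hfy with rfl | rfl <;>
    rcases hab z hz hfz with rfl | rfl <;> simp

section Oval

variable {K : Type} [Field K] {i : ℕ} (φ : (Fin 3 → K) →ₗ[K] K)

theorem hasExactlyTwoZerosOn_of_nucleus_of_infty (hφ : φ ≠ 0) (hN : φ ![0, 1, 0] = 0)
    (hI : φ ![0, 0, 1] = 0) : HasExactlyTwoZerosOn φ (limitOval i K ∪ {![0, 1, 0]}) := by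
  have hA : φ ![1, 0, 0] ≠ 0 := fun hA => hφ (linearForm_eq_zero φ hA hN hI)
  refine ⟨![0, 0, 1], Or.inl (Or.inr rfl), ![0, 1, 0], Or.inr rfl, by simp, hI, hN, ?_⟩
  rintro z ((⟨t, rfl⟩ | rfl) | rfl) hz
  · rw [linearForm_apply_vec, hN, hI] at hz
    simp [hA] at hz
  · exact Or.inl rfl
  · exact Or.inr rfl

variable [CharP K 2]

theorem apply_ovalPoint_add (a d : K) :
    φ ![1, a + d, (a + d) ^ 2 ^ i] = φ ![1, a, a ^ 2 ^ i] + d * φ ![0, 1, d ^ (2 ^ i - 1)] := by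
  have hd : d ^ 2 ^ i = d * d ^ (2 ^ i - 1) := (mul_pow_sub_one (by positivity) d).symm
  rw [linearForm_apply_vec φ 1 (a + d), linearForm_apply_vec φ 1 a,
    linearForm_apply_vec φ 0 1 (d ^ (2 ^ i - 1)), add_pow_char_pow, hd]
  ring

/-- The chord through the oval points `(1:a:a^q)` and `(1:t:t^q)` passes through
`(0:1:(t-a)^(q-1))`. -/
theorem apply_chord_direction_eq_zero {a t : K} (ha : φ ![1, a, a ^ 2 ^ i] = 0)
    (ht : φ ![1, t, t ^ 2 ^ i] = 0) (hta : t ≠ a) : φ ![0, 1, (t - a) ^ (2 ^ i - 1)] = 0 := by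
  have h := apply_ovalPoint_add (i := i) φ a (t - a)
  rw [add_sub_cancel, ht, ha, zero_add, eq_comm] at h
  exact (mul_eq_zero.mp h).resolve_left (sub_ne_zero.mpr hta)

theorem hasExactlyTwoZerosOn_of_infty (hN : φ ![0, 1, 0] ≠ 0) (hI : φ ![0, 0, 1] = 0) :
    HasExactlyTwoZerosOn φ (limitOval i K ∪ {![0, 1, 0]}) := by
  obtain ⟨a, ha'⟩ : ∃ a, a * φ ![0, 1, 0] = -φ ![1, 0, 0] := ⟨_, div_mul_cancel₀ _ hN⟩
  have ha : φ ![1, a, a ^ 2 ^ i] = 0 := by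
    rw [linearForm_apply_vec, hI, ha']
    ring
  refine ⟨_, Or.inl (Or.inl ⟨a, rfl⟩), ![0, 0, 1], Or.inl (Or.inr rfl), by simp, ha, hI, ?_⟩
  rintro z ((⟨t, rfl⟩ | rfl) | rfl) hz
  · by_cases hta : t = a
    · exact Or.inl (by rw [hta])
    · have h := apply_chord_direction_eq_zero φ ha hz hta
      rw [linearForm_apply_vec, hI] at h
      simp [hN] at h
  · exact Or.inr rfl
  · exact absurd hz hN

theorem hasExactlyTwoZerosOn_of_nucleus
    (hK : ∀ x : K, ∃ u : ℕ, 0 < u ∧ u.Coprime i ∧ x ^ 2 ^ u = x)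
    (hN : φ ![0, 1, 0] = 0) (hI : φ ![0, 0, 1] ≠ 0) :
    HasExactlyTwoZerosOn φ (limitOval i K ∪ {![0, 1, 0]}) := by
  obtain ⟨a, ha'⟩ := exists_pow_two_pow_eq hK (-(φ ![1, 0, 0] / φ ![0, 0, 1]))
  have ha : φ ![1, a, a ^ 2 ^ i] = 0 := by
    rw [linearForm_apply_vec, hN, ha']
    field_simp
    ring
  refine ⟨_, Or.inl (Or.inl ⟨a, rfl⟩), ![0, 1, 0], Or.inr rfl, by simp, ha, hN, ?_⟩
  rintro z ((⟨t, rfl⟩ | rfl) | rfl) hz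
  · by_cases hta : t = a
    · exact Or.inl (by rw [hta])
    · have h := eq_of_apply_eq_zero_of_apply_infty_ne_zero φ hI
        (apply_chord_direction_eq_zero φ ha hz hta) hN
      exact absurd h (pow_ne_zero _ (sub_ne_zero.mpr hta))
  · exact absurd hz hI
  · exact Or.inr rfl

/-- A line through neither `(0:0:1)` nor the nucleus that meets the oval at `(1:a:a^q)` meets it
again at `(1:a+s:(a+s)^q)`, where `(0:1:s^(q-1))` is the point of the line on `X = 0`. -/
theorem hasExactlyTwoZerosOn_of_secant
    (hK : ∀ x : K, ∃ u : ℕ, 0 < u ∧ u.Coprime i ∧ x ^ 2 ^ u = x)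
    (hN : φ ![0, 1, 0] ≠ 0) (hI : φ ![0, 0, 1] ≠ 0) {a : K} (ha : φ ![1, a, a ^ 2 ^ i] = 0) :
    HasExactlyTwoZerosOn φ (limitOval i K ∪ {![0, 1, 0]}) := by
  obtain ⟨s, hs0, hs⟩ := exists_ne_zero_pow_two_pow_sub_one_eq hK
    (neg_ne_zero.mpr (div_ne_zero hN hI))
  have hsN : φ ![0, 1, s ^ (2 ^ i - 1)] = 0 := by
    rw [linearForm_apply_vec, hs]
    field_simp
    ring
  have has : φ ![1, a + s, (a + s) ^ 2 ^ i] = 0 := by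
    rw [apply_ovalPoint_add, ha, hsN, mul_zero, add_zero]
  refine ⟨_, Or.inl (Or.inl ⟨a, rfl⟩), _, Or.inl (Or.inl ⟨a + s, rfl⟩),
    fun h => hs0 (by simpa using congrFun h 1), ha, has, ?_⟩
  rintro z ((⟨t, rfl⟩ | rfl) | rfl) hz
  · by_cases hta : t = a
    · exact Or.inl (by rw [hta])
    · have h := eq_of_apply_eq_zero_of_apply_infty_ne_zero φ hI
        (apply_chord_direction_eq_zero φ ha hz hta) hsN
      have hts : t - a = s :=
        pow_two_pow_sub_one_injOn hK (sub_ne_zero.mpr hta) hs0 h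
      exact Or.inr (by rw [← hts, add_sub_cancel])
  · exact absurd hz hI
  · exact absurd hz hN

theorem hasExactlyTwoZerosOn_limitOval_union_nucleus
    (hK : ∀ x : K, ∃ u : ℕ, 0 < u ∧ u.Coprime i ∧ x ^ 2 ^ u = x) (hφ : φ ≠ 0)
    (hmeet : ∃ x ∈ limitOval i K ∪ {![0, 1, 0]}, φ x = 0) :
    HasExactlyTwoZerosOn φ (limitOval i K ∪ {![0, 1, 0]}) := by
  by_cases hN : φ ![0, 1, 0] = 0 <;> by_cases hI : φ ![0, 0, 1] = 0
  · exact hasExactlyTwoZerosOn_of_nucleus_of_infty φ hφ hN hI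
  · exact hasExactlyTwoZerosOn_of_nucleus φ hK hN hI
  · exact hasExactlyTwoZerosOn_of_infty φ hN hI
  · obtain ⟨x, (⟨a, rfl⟩ | rfl) | rfl, hx⟩ := hmeet
    · exact hasExactlyTwoZerosOn_of_secant φ hK hN hI hx
    · exact absurd hx hI
    · exact absurd hx hN

end Oval

theorem stmt15_general (i : ℕ) (ℓ : Type) [Field ℓ] [CharP ℓ 2]
    (hunion : ∀ x : ℓ, ∃ u : ℕ, 0 < u ∧ Nat.Coprime u i ∧ x ^ 2 ^ u = x) :
    (∀ φ : (Fin 3 → ℓ) →ₗ[ℓ] ℓ, φ ≠ 0 →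
      ∀ x ∈ limitOval i ℓ, ∀ y ∈ limitOval i ℓ, ∀ z ∈ limitOval i ℓ,
        φ x = 0 → φ y = 0 → φ z = 0 → x = y ∨ y = z ∨ x = z) ∧
    (∀ φ : (Fin 3 → ℓ) →ₗ[ℓ] ℓ, φ ≠ 0 →
      (∃ x ∈ limitOval i ℓ ∪ {![0, 1, 0]}, φ x = 0) →
      ∃ x ∈ limitOval i ℓ ∪ {![0, 1, 0]}, ∃ y ∈ limitOval i ℓ ∪ {![0, 1, 0]},
        x ≠ y ∧ φ x = 0 ∧ φ y = 0 ∧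
        ∀ z ∈ limitOval i ℓ ∪ {![0, 1, 0]}, φ z = 0 → z = x ∨ z = y) := by
  refine ⟨fun φ hφ x hx y hy z hz hφx hφy hφz => ?_,
    fun φ hφ hmeet => hasExactlyTwoZerosOn_limitOval_union_nucleus φ hunion hφ hmeet⟩
  exact (hasExactlyTwoZerosOn_limitOval_union_nucleus φ hunion hφ ⟨x, Or.inl hx, hφx⟩
    ).eq_or_eq_or_eq (Or.inl hx) (Or.inl hy) (Or.inl hz) hφx hφy hφz

/-- fix `i > 1` and let `ℓ` be the directed union of the fields `F_{2^u}` over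
the set `S(i)` of positive integers `u` coprime to `i` (a field of characteristic 2, each of
whose elements lies in some `F_{2^u}` with `u` coprime to `i`, and containing a subfield of
order `2^u` for every such `u`).  Then `Õ` is an oval of `PG(2,ℓ)` with nucleus `(0:1:0)`:
every line meets `Õ` in at most two points, and every line meeting `Õ ∪ {(0:1:0)}` in at
least one point meets it in exactly two points. -/
theorem stmt15 (i : ℕ) (hi : 1 < i) (ℓ : Type) [Field ℓ] [CharP ℓ 2]
    (hunion : ∀ x : ℓ, ∃ u : ℕ, 0 < u ∧ Nat.Coprime u i ∧ x ^ 2 ^ u = x)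
    (hall : ∀ u : ℕ, 0 < u → Nat.Coprime u i → ∃ S : Subfield ℓ, Nat.card S = 2 ^ u) :
    (∀ φ : (Fin 3 → ℓ) →ₗ[ℓ] ℓ, φ ≠ 0 →
      ∀ x ∈ limitOval i ℓ, ∀ y ∈ limitOval i ℓ, ∀ z ∈ limitOval i ℓ,
        φ x = 0 → φ y = 0 → φ z = 0 → x = y ∨ y = z ∨ x = z) ∧
    (∀ φ : (Fin 3 → ℓ) →ₗ[ℓ] ℓ, φ ≠ 0 →
      (∃ x ∈ limitOval i ℓ ∪ {![0, 1, 0]}, φ x = 0) →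
      ∃ x ∈ limitOval i ℓ ∪ {![0, 1, 0]}, ∃ y ∈ limitOval i ℓ ∪ {![0, 1, 0]},
        x ≠ y ∧ φ x = 0 ∧ φ y = 0 ∧
        ∀ z ∈ limitOval i ℓ ∪ {![0, 1, 0]}, φ z = 0 → z = x ∨ z = y) :=
  stmt15_general i ℓ hunion
end
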